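/- The Rogers–Fine identity holds: Σ_{n≥0} (α;q)_n w^n / (β;q)_n = Σ_{n≥0} (α;q)_n (αwq/β;q)_n β^n w^n q^{n^2−n} (1 − αwq^{2n}) / ((β;q)_n (w;q)_{n+1}), as an identity of formal power series (valid for |q|, |w| < 1 and suitable α, β). -/

import Mathlib

open Finset Filter

/-- Finite q-Pochhammer symbol `(a;q)_n`. -/
noncomputable def qPoch (a q : ℂ) (n : ℕ) : ℂ := ∏ j ∈ Finset.range n, (1 - a * q ^ j)

lemma qPoch_zero (a q : ℂ) : qPoch a q 0 = 1 := by simp [qPoch]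

lemma qPoch_succ (a q : ℂ) (n : ℕ) : qPoch a q (n+1) = qPoch a q n * (1 - a * q ^ n) := by
  simp [qPoch, Finset.prod_range_succ]

lemma qPoch_succ' (a q : ℂ) (n : ℕ) : qPoch a q (n+1) = (1 - a) * qPoch (a*q) q n := by
  rw [qPoch, Finset.prod_range_succ', mul_comm]
  congr 1
  · simp
  · unfold qPoch
    apply Finset.prod_congr rfl
    intro j _
    rw [pow_succ']
    ring

lemma qPoch_add (a q : ℂ) (m n : ℕ) :
    qPoch a q (m + n) = qPoch a q m * qPoch (a * q ^ m) q n := by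
  rw [qPoch, Finset.prod_range_add]
  congr 1
  unfold qPoch
  apply Finset.prod_congr rfl
  intro j _
  rw [pow_add]
  ring

lemma geom_sum_le_inv {r : ℝ} (h0 : 0 ≤ r) (h1 : r < 1) (n : ℕ) :
    ∑ j ∈ range n, r ^ j ≤ (1 - r)⁻¹ := by
  have h2 : (0:ℝ) < 1 - r := by linarith
  have hne : r - 1 ≠ 0 := by linarith
  have hne2 : (1:ℝ) - r ≠ 0 := by linarith
  have h3 : ∑ j ∈ range n, r ^ j = (1 - r^n)/(1-r) := by
    rw [geom_sum_eq (ne_of_lt h1)]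
    field_simp
    ring
  rw [h3, inv_eq_one_div]
  have hp : 0 ≤ r ^ n := pow_nonneg h0 n
  gcongr <;> linarith

lemma qPoch_ne_zero {a q : ℂ} (ha : ∀ j : ℕ, a * q ^ j ≠ 1) (n : ℕ) : qPoch a q n ≠ 0 := by
  rw [qPoch]
  exact Finset.prod_ne_zero_iff.2 fun j _ => sub_ne_zero_of_ne (Ne.symm (ha j))

lemma norm_qPoch_le {q : ℂ} (hq : ‖q‖ < 1) {a : ℂ} {A : ℝ} (hA : ‖a‖ ≤ A) (n : ℕ) :
    ‖qPoch a q n‖ ≤ Real.exp (A / (1 - ‖q‖)) := by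
  have hq0 : (0:ℝ) ≤ ‖q‖ := norm_nonneg q
  have hA0 : 0 ≤ A := le_trans (norm_nonneg a) hA
  rw [qPoch, norm_prod]
  calc ∏ j ∈ range n, ‖1 - a * q ^ j‖ ≤ ∏ j ∈ range n, Real.exp (A * ‖q‖ ^ j) := by
        apply Finset.prod_le_prod (fun j _ => norm_nonneg _)
        intro j _
        calc ‖1 - a * q ^ j‖ ≤ ‖(1:ℂ)‖ + ‖a * q ^ j‖ := norm_sub_le _ _
          _ ≤ 1 + A * ‖q‖ ^ j := by
              rw [norm_one, norm_mul, norm_pow]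
              gcongr
          _ ≤ Real.exp (A * ‖q‖ ^ j) := by
              have := Real.add_one_le_exp (A * ‖q‖ ^ j)
              linarith
    _ = Real.exp (∑ j ∈ range n, A * ‖q‖ ^ j) := (Real.exp_sum _ _).symm
    _ ≤ Real.exp (A / (1 - ‖q‖)) := by
        apply Real.exp_le_exp.2
        rw [← Finset.mul_sum, div_eq_mul_inv]
        exact mul_le_mul_of_nonneg_left (geom_sum_le_inv hq0 hq n) hA0

lemma exp_neg_le_one_sub {x : ℝ} (h0 : 0 ≤ x) (h2 : x ≤ 1/2) : Real.exp (-(2*x)) ≤ 1 - x := by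
  have h1 : 2*x + 1 ≤ Real.exp (2*x) := Real.add_one_le_exp (2*x)
  have h3 : Real.exp (-(2*x)) * Real.exp (2*x) = 1 := by
    rw [← Real.exp_add]; simp
  nlinarith [Real.exp_pos (-(2*x)), Real.exp_pos (2*x)]

lemma qPoch_lower {a q : ℂ} (hq : ‖q‖ < 1) (ha : ∀ j : ℕ, a * q ^ j ≠ 1) :
    ∃ c : ℝ, 0 < c ∧ ∀ n, c ≤ ‖qPoch a q n‖ := by
  have hq0 : (0:ℝ) ≤ ‖q‖ := norm_nonneg q
  have hq1 : (0:ℝ) < 1 - ‖q‖ := by linarith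
  -- choose J with ‖a‖ * ‖q‖^J ≤ 1/2
  have htend : Tendsto (fun n : ℕ => ‖a‖ * ‖q‖ ^ n) atTop (nhds 0) := by
    simpa using (tendsto_pow_atTop_nhds_zero_of_lt_one hq0 hq).const_mul ‖a‖
  obtain ⟨J, hJ⟩ := (htend.eventually_le_const (by norm_num : (0:ℝ) < 1/2)).exists
  obtain ⟨n0, hn0mem, hmin⟩ := Finset.exists_min_image (Finset.range (J+1))
    (fun n => ‖qPoch a q n‖) ⟨J, by simp⟩
  set c0 : ℝ := ‖qPoch a q n0‖ with hc0
  have hc0pos : 0 < c0 := norm_pos_iff.2 (qPoch_ne_zero ha n0)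
  set E : ℝ := Real.exp (-(1 - ‖q‖)⁻¹) with hE
  have hEpos : 0 < E := Real.exp_pos _
  have hE1 : E ≤ 1 := by
    rw [hE]
    apply Real.exp_le_one_iff.2
    simp only [Left.neg_nonpos_iff]
    positivity
  refine ⟨c0 * E, mul_pos hc0pos hEpos, fun n => ?_⟩
  -- inner bound
  have inner : ∀ m : ℕ, E ≤ ‖qPoch (a * q ^ J) q m‖ := by
    intro m
    rw [qPoch, norm_prod]
    have step : ∀ j ∈ Finset.range m,
        Real.exp (-(2 * (‖a‖ * ‖q‖ ^ J * ‖q‖ ^ j))) ≤ ‖1 - a * q ^ J * q ^ j‖ := by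
      intro j _
      have hxnn : 0 ≤ ‖a‖ * ‖q‖ ^ J * ‖q‖ ^ j := by positivity
      have hx2 : ‖a‖ * ‖q‖ ^ J * ‖q‖ ^ j ≤ 1/2 := by
        calc ‖a‖ * ‖q‖ ^ J * ‖q‖ ^ j ≤ ‖a‖ * ‖q‖ ^ J * 1 := by
              gcongr
              exact pow_le_one₀ hq0 (le_of_lt hq)
          _ ≤ 1/2 := by rw [mul_one]; exact hJ
      calc Real.exp (-(2 * (‖a‖ * ‖q‖ ^ J * ‖q‖ ^ j)))
          ≤ 1 - ‖a‖ * ‖q‖ ^ J * ‖q‖ ^ j := exp_neg_le_one_sub hxnn hx2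
        _ ≤ 1 - ‖a * q ^ J * q ^ j‖ := by
            rw [norm_mul, norm_mul, norm_pow, norm_pow]
        _ ≤ ‖1 - a * q ^ J * q ^ j‖ := by
            have := norm_sub_norm_le (1 : ℂ) (a * q ^ J * q ^ j)
            rw [norm_one] at this
            linarith
    calc E ≤ Real.exp (∑ j ∈ Finset.range m, -(2 * (‖a‖ * ‖q‖ ^ J * ‖q‖ ^ j))) := by
          apply Real.exp_le_exp.2
          have hsum : ∑ j ∈ Finset.range m, (2 * (‖a‖ * ‖q‖ ^ J)) * ‖q‖ ^ j
              ≤ (2 * (‖a‖ * ‖q‖ ^ J)) * (1 - ‖q‖)⁻¹ := by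
            rw [← Finset.mul_sum]
            apply mul_le_mul_of_nonneg_left (geom_sum_le_inv hq0 hq m) (by positivity)
          have h2 : (2 * (‖a‖ * ‖q‖ ^ J)) * (1 - ‖q‖)⁻¹ ≤ (1 - ‖q‖)⁻¹ := by
            have : 2 * (‖a‖ * ‖q‖ ^ J) ≤ 1 := by linarith
            nlinarith [inv_nonneg.2 (le_of_lt hq1)]
          have : ∑ j ∈ Finset.range m, -(2 * (‖a‖ * ‖q‖ ^ J * ‖q‖ ^ j))
              = -(∑ j ∈ Finset.range m, (2 * (‖a‖ * ‖q‖ ^ J)) * ‖q‖ ^ j) := by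
            rw [← Finset.sum_neg_distrib]
            apply Finset.sum_congr rfl
            intro j _; ring
          rw [this]
          linarith
      _ = ∏ j ∈ Finset.range m, Real.exp (-(2 * (‖a‖ * ‖q‖ ^ J * ‖q‖ ^ j))) :=
          Real.exp_sum _ _
      _ ≤ ∏ j ∈ Finset.range m, ‖1 - a * q ^ J * q ^ j‖ :=
          Finset.prod_le_prod (fun j _ => le_of_lt (Real.exp_pos _)) step
  rcases le_or_gt n J with h | h
  · calc c0 * E ≤ c0 * 1 := by nlinarith
      _ = c0 := mul_one c0
      _ ≤ ‖qPoch a q n‖ := hmin n (Finset.mem_range.2 (by omega))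
  · have hn : n = J + (n - J) := by omega
    rw [hn, qPoch_add, norm_mul]
    have h1 : c0 ≤ ‖qPoch a q J‖ := hmin J (Finset.mem_range.2 (by omega))
    have h2 := inner (n - J)
    have := norm_nonneg (qPoch a q J)
    nlinarith

lemma small_ne_one {q t : ℂ} (hq : ‖q‖ < 1) (ht : ‖t‖ < 1) : ∀ j : ℕ, t * q ^ j ≠ 1 := by
  intro j h
  have h1 : ‖t * q ^ j‖ < 1 := by
    rw [norm_mul, norm_pow]
    calc ‖t‖ * ‖q‖ ^ j ≤ ‖t‖ * 1 := by
          gcongr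
          exact pow_le_one₀ (norm_nonneg q) (le_of_lt hq)
      _ < 1 := by rw [mul_one]; exact ht
  rw [h, norm_one] at h1
  exact lt_irrefl _ h1

lemma summable_F {q b t : ℂ} (hq : ‖q‖ < 1) (hb : ∀ j : ℕ, b * q ^ j ≠ 1) (ht : ‖t‖ < 1)
    (a : ℂ) : Summable (fun n : ℕ => qPoch a q n * t ^ n / qPoch b q n) := by
  obtain ⟨c, hc, hcle⟩ := qPoch_lower hq hb
  set M : ℝ := Real.exp (‖a‖ / (1 - ‖q‖)) with hM
  apply Summable.of_norm_bounded (g := fun n => (M / c) * ‖t‖ ^ n)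
  · exact (summable_geometric_of_lt_one (norm_nonneg t) ht).mul_left _
  · intro n
    rw [norm_div, norm_mul, norm_pow]
    calc ‖qPoch a q n‖ * ‖t‖ ^ n / ‖qPoch b q n‖
        ≤ M * ‖t‖ ^ n / c := by
          apply div_le_div₀ (by positivity) ?_ hc (hcle n)
          exact mul_le_mul_of_nonneg_right (norm_qPoch_le hq le_rfl n) (by positivity)
      _ = M / c * ‖t‖ ^ n := by ring

lemma summable_aux {s : ℝ} (hs0 : 0 ≤ s) (hs : s < 1) (K D : ℝ) (hK : 0 ≤ K) (hD : 0 ≤ D) :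
    Summable (fun n : ℕ => K * D ^ n * s ^ (n ^ 2 - n)) := by
  apply summable_of_ratio_norm_eventually_le (r := 1/2) (by norm_num)
  have htend : Tendsto (fun n : ℕ => D * (s ^ 2) ^ n) atTop (nhds 0) := by
    simpa using (tendsto_pow_atTop_nhds_zero_of_lt_one (by positivity)
      (by nlinarith : s ^ 2 < 1)).const_mul D
  filter_upwards [htend.eventually_le_const (by norm_num : (0:ℝ) < 1/2)] with n hn
  have hexp : (n + 1) ^ 2 - (n + 1) = (n ^ 2 - n) + 2 * n := by
    have h1 : n ≤ n ^ 2 := Nat.le_self_pow (by norm_num) n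
    have h2 : (n + 1) ^ 2 = n ^ 2 + 2 * n + 1 := by ring
    omega
  have hfn : (0:ℝ) ≤ K * D ^ n * s ^ (n ^ 2 - n) := by positivity
  rw [Real.norm_eq_abs, Real.norm_eq_abs, abs_of_nonneg (by positivity), abs_of_nonneg hfn]
  have heq : K * D ^ (n + 1) * s ^ ((n + 1) ^ 2 - (n + 1))
      = (D * (s ^ 2) ^ n) * (K * D ^ n * s ^ (n ^ 2 - n)) := by
    rw [hexp, pow_add, pow_succ, ← pow_mul]
    ring
  rw [heq]
  exact mul_le_mul_of_nonneg_right hn hfn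

noncomputable def RF (q a b t : ℂ) : ℂ := ∑' n : ℕ, qPoch a q n * t ^ n / qPoch b q n

lemma FE {q a b t : ℂ} (hq : ‖q‖ < 1) (hb : ∀ j : ℕ, b * q ^ j ≠ 1) (hb0 : b ≠ 0)
    (ht : ‖t‖ < 1) :
    RF q a b t = (1 - a*t)/(1 - t)
      + (1-a)*(1-a*t*q/b)*b*t/((1-b)*(1-t)) * RF q (a*q) (b*q) (t*q) := by
  classical
  have hb' : ∀ j : ℕ, (b*q) * q ^ j ≠ 1 := by
    intro j
    have h := hb (j+1)
    have e : b * q ^ (j+1) = (b*q) * q ^ j := by rw [pow_succ']; ring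
    rwa [e] at h
  have ht' : ‖t*q‖ < 1 := by
    rw [norm_mul]
    nlinarith [norm_nonneg t, norm_nonneg q]
  set u : ℕ → ℂ := fun n => qPoch a q n * t ^ n / qPoch b q n with hu_def
  set v : ℕ → ℂ := fun n => qPoch (a*q) q n * (t*q) ^ n / qPoch (b*q) q n with hv_def
  have hRF1 : RF q a b t = ∑' n, u n := rfl
  have hRF2 : RF q (a*q) (b*q) (t*q) = ∑' n, v n := rfl
  have hu : Summable u := summable_F hq hb ht a
  have hv : Summable v := summable_F hq hb' ht' (a*q)
  have hu1 : Summable (fun n => u (n+1)) := (summable_nat_add_iff 1).2 hu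
  have hu2 : Summable (fun n => u (n+2)) := (summable_nat_add_iff 2).2 hu
  have hv1 : Summable (fun n => v (n+1)) := (summable_nat_add_iff 1).2 hv
  have h1b : (1:ℂ) - b ≠ 0 := sub_ne_zero_of_ne (Ne.symm (by simpa using hb 0))
  have ht1 : t ≠ 1 := by intro h; rw [h, norm_one] at ht; exact lt_irrefl _ ht
  have h1t : (1:ℂ) - t ≠ 0 := sub_ne_zero_of_ne (Ne.symm ht1)
  have key : ∀ n : ℕ, (1-b) * (u (n+2) - t * u (n+1))
      = (1-a)*b*t * v (n+1) - (1-a)*a*t^2*q * v n := by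
    intro n
    have hY : qPoch (b*q) q n ≠ 0 := qPoch_ne_zero hb' n
    have hbq : 1 - (b*q) * q ^ n ≠ 0 := sub_ne_zero_of_ne (Ne.symm (hb' n))
    simp only [hu_def, hv_def]
    rw [show (n+2) = (n+1)+1 from rfl, qPoch_succ' a q (n+1), qPoch_succ' b q (n+1),
        qPoch_succ (a*q) q n, qPoch_succ (b*q) q n, qPoch_succ' a q n, qPoch_succ' b q n]
    field_simp
    ring
  have hsum : (1-b) * (∑' n, u (n+2)) - (1-b)*t*(∑' n, u (n+1))
      = (1-a)*b*t*(∑' n, v (n+1)) - (1-a)*a*t^2*q*(∑' n, v n) := by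
    have h1 : ∑' n, ((1-b) * (u (n+2) - t * u (n+1)))
        = ∑' n, ((1-a)*b*t * v (n+1) - (1-a)*a*t^2*q * v n) := tsum_congr key
    rw [Summable.tsum_sub (hv1.mul_left _) (hv.mul_left _), tsum_mul_left, tsum_mul_left,
        tsum_mul_left, Summable.tsum_sub hu2 (hu1.mul_left t), tsum_mul_left] at h1
    linear_combination h1
  have hS : ∑' n, u n = 1 + ∑' n, u (n+1) := by
    have h := Summable.tsum_eq_zero_add hu
    have hu0 : u 0 = 1 := by simp [hu_def, qPoch_zero]
    rwa [hu0] at h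
  have hV : ∑' n, v n = 1 + ∑' n, v (n+1) := by
    have h := Summable.tsum_eq_zero_add hv
    have hv0 : v 0 = 1 := by simp [hv_def, qPoch_zero]
    rwa [hv0] at h
  have key0 : (1-b) * u 1 = (1-a) * t := by
    simp only [hu_def]
    rw [show (1:ℕ) = 0+1 from rfl, qPoch_succ' a q 0, qPoch_succ' b q 0, qPoch_zero, qPoch_zero]
    field_simp
    ring
  have hS1 : (1-b) * (∑' n, u (n+1)) = (1-a)*t + (1-b)*(∑' n, u (n+2)) := by
    have h := Summable.tsum_eq_zero_add hu1
    rw [h, mul_add, key0]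
  have KEY : (1-b)*(1-t)*(∑' n, u n)
      = (1-a*t)*(1-b) + ((1-a)*b*t - (1-a)*a*t^2*q) * (∑' n, v n) := by
    linear_combination hsum + hS1 + ((1-b)-(1-b)*t)*hS - (1-a)*b*t*hV
  have hne : ((1:ℂ)-b)*(1-t) ≠ 0 := mul_ne_zero h1b h1t
  have expand : (1 - a*t)/(1 - t) + (1-a)*(1-a*t*q/b)*b*t/((1-b)*(1-t)) * (∑' n, v n)
      = ((1-a*t)*(1-b) + ((1-a)*b*t - (1-a)*a*t^2*q) * (∑' n, v n)) / ((1-b)*(1-t)) := by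
    field_simp
  rw [hRF1, hRF2, expand, eq_div_iff hne]
  linear_combination KEY

noncomputable def RT (q a b t : ℂ) (n : ℕ) : ℂ :=
  qPoch a q n * qPoch (a*t*q/b) q n * b^n * t^n * q^(n^2-n) * (1 - a*t*q^(2*n)) /
    (qPoch b q n * qPoch t q (n+1))

noncomputable def RC (q a b t : ℂ) : ℂ := (1-a)*(1-a*t*q/b)*b*t/((1-b)*(1-t))

lemma RT_zero (q a b t : ℂ) : RT q a b t 0 = (1 - a*t)/(1-t) := by
  simp [RT, qPoch, Finset.prod_range_one]

lemma pow_sq_step (q : ℂ) (n : ℕ) : q^((n+1)^2-(n+1)) = q^(n^2-n) * q^(2*n) := by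
  rw [← pow_add]
  congr 1
  have h1 : n ≤ n ^ 2 := Nat.le_self_pow (by norm_num) n
  have h2 : (n + 1) ^ 2 = n ^ 2 + 2 * n + 1 := by ring
  omega

lemma Tstep {q b t : ℂ} (hq : ‖q‖ < 1) (hb : ∀ j : ℕ, b * q ^ j ≠ 1) (hb0 : b ≠ 0)
    (ht : ‖t‖ < 1) (a : ℂ) (n : ℕ) :
    RT q a b t (n+1) = RC q a b t * RT q (a*q) (b*q) (t*q) n := by
  have hb' : ∀ j : ℕ, (b*q) * q ^ j ≠ 1 := by
    intro j
    have h := hb (j+1)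
    have e : b * q ^ (j+1) = (b*q) * q ^ j := by rw [pow_succ']; ring
    rwa [e] at h
  have ht' : ‖t*q‖ < 1 := by
    rw [norm_mul]; nlinarith [norm_nonneg t, norm_nonneg q]
  have h1b : (1:ℂ) - b ≠ 0 := sub_ne_zero_of_ne (Ne.symm (by simpa using hb 0))
  have ht1 : t ≠ 1 := by intro h; rw [h, norm_one] at ht; exact lt_irrefl _ ht
  have h1t : (1:ℂ) - t ≠ 0 := sub_ne_zero_of_ne (Ne.symm ht1)
  have hY1 : qPoch (b*q) q n ≠ 0 := qPoch_ne_zero hb' n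
  have hY2 : qPoch (t*q) q (n+1) ≠ 0 := qPoch_ne_zero (small_ne_one hq ht') (n+1)
  have earg : (a*q)*(t*q)*q/(b*q) = (a*t*q/b)*q := by
    rcases eq_or_ne q 0 with h | h
    · simp [h]
    · field_simp
  rw [RT, RT, RC, earg, qPoch_succ' a q n, qPoch_succ' b q n, qPoch_succ' (a*t*q/b) q n,
      show (n+2) = (n+1)+1 from rfl, qPoch_succ' t q (n+1), pow_sq_step]
  field_simp
  ring

lemma RT_prod {q : ℂ} (hq : ‖q‖ < 1) (hq0 : q ≠ 0) :
    ∀ (N : ℕ) (a b t : ℂ), (∀ j : ℕ, b * q ^ j ≠ 1) → b ≠ 0 → ‖t‖ < 1 →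
    RT q a b t N = (∏ k ∈ Finset.range N, RC q (a*q^k) (b*q^k) (t*q^k)) *
      ((1 - (a*q^N)*(t*q^N))/(1 - t*q^N)) := by
  intro N
  induction N with
  | zero =>
      intro a b t hb hb0 ht
      simp [RT_zero]
  | succ N ih =>
      intro a b t hb hb0 ht
      have hb' : ∀ j : ℕ, (b*q) * q ^ j ≠ 1 := by
        intro j
        have h := hb (j+1)
        have e : b * q ^ (j+1) = (b*q) * q ^ j := by rw [pow_succ']; ring
        rwa [e] at h
      have ht' : ‖t*q‖ < 1 := by
        rw [norm_mul]; nlinarith [norm_nonneg t, norm_nonneg q]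
      have hbq0 : b * q ≠ 0 := mul_ne_zero hb0 hq0
      rw [Tstep hq hb hb0 ht a N, ih (a*q) (b*q) (t*q) hb' hbq0 ht',
          Finset.prod_range_succ']
      have e : ∀ (x : ℂ) (k : ℕ), (x*q) * q ^ k = x * q ^ (k+1) := by
        intro x k; rw [pow_succ']; ring
      simp only [e, pow_zero, mul_one]
      ring

lemma ITER {q a b t : ℂ} (hq : ‖q‖ < 1) (hq0 : q ≠ 0) (hb : ∀ j : ℕ, b * q ^ j ≠ 1)
    (hb0 : b ≠ 0) (ht : ‖t‖ < 1) :
    ∀ N : ℕ, RF q a b t = (∑ n ∈ Finset.range N, RT q a b t n) +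
      (∏ k ∈ Finset.range N, RC q (a*q^k) (b*q^k) (t*q^k)) * RF q (a*q^N) (b*q^N) (t*q^N) := by
  have hbshift : ∀ (N : ℕ) (j : ℕ), (b*q^N) * q ^ j ≠ 1 := by
    intro N j
    have h := hb (N+j)
    have e : b * q ^ (N+j) = (b*q^N) * q ^ j := by rw [pow_add]; ring
    rwa [e] at h
  have htshift : ∀ N : ℕ, ‖t*q^N‖ < 1 := by
    intro N
    rw [norm_mul, norm_pow]
    have h1 : ‖q‖ ^ N ≤ 1 := pow_le_one₀ (norm_nonneg q) (le_of_lt hq)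
    nlinarith [norm_nonneg t, pow_nonneg (norm_nonneg q) N]
  intro N
  induction N with
  | zero => simp
  | succ N ih =>
      have hb0N : b * q ^ N ≠ 0 := mul_ne_zero hb0 (pow_ne_zero N hq0)
      have fe := FE (a := a*q^N) hq (hbshift N) hb0N (htshift N)
      have e : ∀ x : ℂ, (x*q^N)*q = x*q^(N+1) := by
        intro x; rw [pow_succ]; ring
      rw [e, e, e] at fe
      rw [ih, fe, Finset.sum_range_succ, Finset.prod_range_succ,
          RT_prod hq hq0 N a b t hb hb0 ht]
      simp only [RC]
      ring

lemma norm_RF_le {q a b t : ℂ} {A c r : ℝ} (hA : ∀ n, ‖qPoch a q n‖ ≤ A) (hc : 0 < c)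
    (hcle : ∀ n, c ≤ ‖qPoch b q n‖) (htr : ‖t‖ ≤ r) (hr : r < 1) :
    ‖RF q a b t‖ ≤ A / c * (1-r)⁻¹ := by
  have hr0 : 0 ≤ r := le_trans (norm_nonneg t) htr
  have hA0 : 0 < A := by
    have h := hA 0
    rw [qPoch_zero, norm_one] at h
    linarith
  set f : ℕ → ℂ := fun n => qPoch a q n * t ^ n / qPoch b q n with hf
  have hbound : ∀ n, ‖f n‖ ≤ A / c * r ^ n := by
    intro n
    rw [hf]
    simp only [norm_div, norm_mul, norm_pow]
    calc ‖qPoch a q n‖ * ‖t‖ ^ n / ‖qPoch b q n‖ ≤ A * r ^ n / c := by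
          apply div_le_div₀ (by positivity) ?_ hc (hcle n)
          exact mul_le_mul (hA n) (pow_le_pow_left₀ (norm_nonneg t) htr n)
            (by positivity) (le_of_lt hA0)
      _ = A / c * r ^ n := by ring
  have hg : Summable (fun n : ℕ => A / c * r ^ n) :=
    (summable_geometric_of_lt_one hr0 hr).mul_left _
  have hnorm : Summable (fun n => ‖f n‖) :=
    Summable.of_nonneg_of_le (fun n => norm_nonneg _) hbound hg
  calc ‖RF q a b t‖ = ‖∑' n, f n‖ := rfl
    _ ≤ ∑' n, ‖f n‖ := norm_tsum_le_tsum_norm hnorm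
    _ ≤ ∑' n : ℕ, A / c * r ^ n := Summable.tsum_le_tsum hbound hnorm hg
    _ = A / c * ∑' n : ℕ, r ^ n := tsum_mul_left
    _ = A / c * (1-r)⁻¹ := by rw [tsum_geometric_of_lt_one hr0 hr]

lemma summable_RT {q α β w : ℂ} (hq : ‖q‖ < 1) (hβ : ∀ j : ℕ, β * q ^ j ≠ 1) (hw : ‖w‖ < 1) :
    Summable (RT q α β w) := by
  obtain ⟨cb, hcb, hcble⟩ := qPoch_lower hq hβ
  obtain ⟨cw, hcw, hcwle⟩ := qPoch_lower hq (small_ne_one hq hw)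
  set Ma : ℝ := Real.exp (‖α‖ / (1 - ‖q‖)) with hMa
  set M2 : ℝ := Real.exp (‖α*w*q/β‖ / (1 - ‖q‖)) with hM2
  have hMa0 : 0 < Ma := Real.exp_pos _
  have hM20 : 0 < M2 := Real.exp_pos _
  apply Summable.of_norm_bounded
    (g := fun n => (Ma * M2 * (1 + ‖α‖*‖w‖) / (cb * cw)) * (‖β‖*‖w‖) ^ n * ‖q‖ ^ (n^2 - n))
  · exact summable_aux (norm_nonneg q) hq _ _ (by positivity) (by positivity)
  · intro n
    have hq1 : ‖q‖ ^ (2*n) ≤ 1 := pow_le_one₀ (norm_nonneg q) (le_of_lt hq)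
    have h4 : ‖qPoch α q n‖ ≤ Ma := norm_qPoch_le hq le_rfl n
    have h5 : ‖qPoch (α*w*q/β) q n‖ ≤ M2 := norm_qPoch_le hq le_rfl n
    have h6 : ‖1 - α*w*q^(2*n)‖ ≤ 1 + ‖α‖*‖w‖ := by
      calc ‖1 - α*w*q^(2*n)‖ ≤ ‖(1:ℂ)‖ + ‖α*w*q^(2*n)‖ := norm_sub_le _ _
        _ = 1 + ‖α‖*‖w‖*‖q‖^(2*n) := by rw [norm_one, norm_mul, norm_mul, norm_pow]
        _ ≤ 1 + ‖α‖*‖w‖ := by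
            have g1 := norm_nonneg α
            have g2 := norm_nonneg w
            have g4 := mul_le_mul_of_nonneg_left hq1 (mul_nonneg g1 g2)
            rw [mul_one] at g4
            linarith [g4]
    simp only [RT, norm_div, norm_mul, norm_pow]
    have hnum : ‖qPoch α q n‖ * ‖qPoch (α*w*q/β) q n‖ * ‖β‖^n * ‖w‖^n * ‖q‖^(n^2-n)
        * ‖1 - α*w*q^(2*n)‖ ≤ Ma * M2 * ‖β‖^n * ‖w‖^n * ‖q‖^(n^2-n) * (1 + ‖α‖*‖w‖) := by
      gcongr
    have hden : cb * cw ≤ ‖qPoch β q n‖ * ‖qPoch w q (n+1)‖ :=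
      mul_le_mul (hcble n) (hcwle (n+1)) (le_of_lt hcw) (le_trans (le_of_lt hcb) (hcble n))
    calc ‖qPoch α q n‖ * ‖qPoch (α*w*q/β) q n‖ * ‖β‖^n * ‖w‖^n * ‖q‖^(n^2-n)
          * ‖1 - α*w*q^(2*n)‖ / (‖qPoch β q n‖ * ‖qPoch w q (n+1)‖)
        ≤ Ma * M2 * ‖β‖^n * ‖w‖^n * ‖q‖^(n^2-n) * (1 + ‖α‖*‖w‖) / (cb * cw) :=
          div_le_div₀ (by positivity) hnum (by positivity) hden
      _ = Ma * M2 * (1 + ‖α‖*‖w‖) / (cb * cw) * (‖β‖*‖w‖) ^ n * ‖q‖ ^ (n^2 - n) := by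
          rw [mul_pow]
          ring

lemma norm_RCprod {q α β w : ℂ} (hq : ‖q‖ < 1) (hq0 : q ≠ 0) (hβ0 : β ≠ 0) (hw : ‖w‖ < 1)
    {cf : ℝ} (hcf : 0 < cf) (hfac : ∀ k : ℕ, cf ≤ ‖1 - β * q ^ k‖) (N : ℕ) :
    ‖∏ k ∈ Finset.range N, RC q (α*q^k) (β*q^k) (w*q^k)‖
      ≤ ((1+‖α‖)*(1+‖α‖*‖w‖*‖q‖/‖β‖)*(‖β‖*‖w‖)/(cf*(1-‖w‖)))^N * ‖q‖^(N^2-N) := by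
  have h1w : (0:ℝ) < 1 - ‖w‖ := by linarith
  have hβn : (0:ℝ) < ‖β‖ := norm_pos_iff.2 hβ0
  set D : ℝ := (1+‖α‖)*(1+‖α‖*‖w‖*‖q‖/‖β‖)*(‖β‖*‖w‖)/(cf*(1-‖w‖)) with hD
  have hq1 : ∀ k : ℕ, ‖q‖ ^ k ≤ 1 := fun k => pow_le_one₀ (norm_nonneg q) (le_of_lt hq)
  have hfacb : ∀ k ∈ Finset.range N, ‖RC q (α*q^k) (β*q^k) (w*q^k)‖ ≤ D * (‖q‖^2)^k := by
    intro k _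
    have earg : (α*q^k)*(w*q^k)*q/(β*q^k) = α*w*q^(k+1)/β := by
      field_simp
      ring
    rw [RC, earg]
    simp only [norm_div, norm_mul, norm_pow]
    have b1 : ‖1 - α*q^k‖ ≤ 1 + ‖α‖ := by
      calc ‖1 - α*q^k‖ ≤ ‖(1:ℂ)‖ + ‖α*q^k‖ := norm_sub_le _ _
        _ = 1 + ‖α‖*‖q‖^k := by rw [norm_one, norm_mul, norm_pow]
        _ ≤ 1 + ‖α‖ := by nlinarith [norm_nonneg α, hq1 k, pow_nonneg (norm_nonneg q) k]
    have b2 : ‖1 - α*w*q^(k+1)/β‖ ≤ 1 + ‖α‖*‖w‖*‖q‖/‖β‖ := by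
      calc ‖1 - α*w*q^(k+1)/β‖ ≤ ‖(1:ℂ)‖ + ‖α*w*q^(k+1)/β‖ := norm_sub_le _ _
        _ = 1 + ‖α‖*‖w‖*(‖q‖^k*‖q‖)/‖β‖ := by
            rw [norm_one, norm_div, norm_mul, norm_mul, norm_pow, pow_succ]
        _ ≤ 1 + ‖α‖*‖w‖*‖q‖/‖β‖ := by
            gcongr
            have h := mul_le_mul_of_nonneg_right (hq1 k) (norm_nonneg q)
            linarith [h]
    have b3 : 1 - ‖w‖ ≤ ‖1 - w*q^k‖ := by
      have h := norm_sub_norm_le (1:ℂ) (w*q^k)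
      rw [norm_one, norm_mul, norm_pow] at h
      have h2 : ‖w‖*‖q‖^k ≤ ‖w‖ := by
        have := mul_le_mul_of_nonneg_left (hq1 k) (norm_nonneg w)
        linarith [this]
      linarith
    calc ‖1 - α*q^k‖ * ‖1 - α*w*q^(k+1)/β‖ * (‖β‖*‖q‖^k) * (‖w‖*‖q‖^k)
          / (‖1 - β*q^k‖ * ‖1 - w*q^k‖)
        ≤ (1+‖α‖) * (1+‖α‖*‖w‖*‖q‖/‖β‖) * (‖β‖*‖q‖^k) * (‖w‖*‖q‖^k) / (cf*(1-‖w‖)) := by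
          apply div_le_div₀ (by positivity) ?_ (by positivity) ?_
          · gcongr
          · exact mul_le_mul (hfac k) b3 (le_of_lt h1w) (le_trans (le_of_lt hcf) (hfac k))
      _ = D * (‖q‖^2)^k := by
          rw [hD]
          ring
  calc ‖∏ k ∈ Finset.range N, RC q (α*q^k) (β*q^k) (w*q^k)‖
      = ∏ k ∈ Finset.range N, ‖RC q (α*q^k) (β*q^k) (w*q^k)‖ := norm_prod _ _
    _ ≤ ∏ k ∈ Finset.range N, (D * (‖q‖^2)^k) :=
        Finset.prod_le_prod (fun k _ => norm_nonneg _) hfacb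
    _ = D^N * (‖q‖^2)^(∑ k ∈ Finset.range N, k) := by
        rw [Finset.prod_mul_distrib, Finset.prod_const, Finset.card_range,
          Finset.prod_pow_eq_pow_sum]
    _ = D^N * ‖q‖^(N^2-N) := by
        have he : 2 * (∑ k ∈ Finset.range N, k) = N^2 - N := by
          have h1 := Finset.sum_range_id_mul_two N
          rcases N with _ | M
          · simp
          · have h1' : (∑ i ∈ Finset.range (M+1), i) * 2 = (M+1)*M := by simpa using h1
            have h2 : (M+1)^2 = 2 * (∑ i ∈ Finset.range (M+1), i) + (M+1) := by
              rw [mul_comm 2, h1']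
              ring
            exact (Nat.sub_eq_of_eq_add h2).symm
        rw [← pow_mul, he]

theorem main_ne_zero (α β w q : ℂ) (hq : ‖q‖ < 1) (hw : ‖w‖ < 1) (hβ0 : β ≠ 0)
    (hβ : ∀ j : ℕ, β * q ^ j ≠ 1) (hq0 : q ≠ 0) :
    (∑' n : ℕ, qPoch α q n * w ^ n / qPoch β q n) = ∑' n : ℕ, RT q α β w n := by
  have h1w : (0:ℝ) < 1 - ‖w‖ := by linarith
  obtain ⟨cb, hcb, hcble⟩ := qPoch_lower hq hβ
  set Mb : ℝ := Real.exp (‖β‖ / (1 - ‖q‖)) with hMb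
  have hMb0 : 0 < Mb := Real.exp_pos _
  set cf : ℝ := cb / Mb with hcfdef
  have hcf : 0 < cf := div_pos hcb hMb0
  have hqk : ∀ k : ℕ, ‖q‖ ^ k ≤ 1 := fun k => pow_le_one₀ (norm_nonneg q) (le_of_lt hq)
  have hfac : ∀ k : ℕ, cf ≤ ‖1 - β * q ^ k‖ := by
    intro k
    have h1 : cb ≤ ‖qPoch β q (k+1)‖ := hcble (k+1)
    rw [qPoch_succ, norm_mul] at h1
    have h2 : ‖qPoch β q k‖ ≤ Mb := norm_qPoch_le hq le_rfl k
    rw [hcfdef, div_le_iff₀ hMb0]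
    calc cb ≤ ‖qPoch β q k‖ * ‖1 - β * q ^ k‖ := h1
      _ ≤ Mb * ‖1 - β * q ^ k‖ := by
          exact mul_le_mul_of_nonneg_right h2 (norm_nonneg _)
      _ = ‖1 - β * q ^ k‖ * Mb := by ring
  have hcshift : ∀ N n : ℕ, cf ≤ ‖qPoch (β * q ^ N) q n‖ := by
    intro N n
    have h1 : cb ≤ ‖qPoch β q (N+n)‖ := hcble (N+n)
    rw [qPoch_add, norm_mul] at h1
    have h2 : ‖qPoch β q N‖ ≤ Mb := norm_qPoch_le hq le_rfl N
    rw [hcfdef, div_le_iff₀ hMb0]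
    calc cb ≤ ‖qPoch β q N‖ * ‖qPoch (β * q ^ N) q n‖ := h1
      _ ≤ Mb * ‖qPoch (β * q ^ N) q n‖ :=
          mul_le_mul_of_nonneg_right h2 (norm_nonneg _)
      _ = ‖qPoch (β * q ^ N) q n‖ * Mb := by ring
  set Ma : ℝ := Real.exp (‖α‖ / (1 - ‖q‖)) with hMadef
  have hAshift : ∀ N n : ℕ, ‖qPoch (α * q ^ N) q n‖ ≤ Ma := by
    intro N n
    apply norm_qPoch_le hq
    rw [norm_mul, norm_pow]
    have := mul_le_mul_of_nonneg_left (hqk N) (norm_nonneg α)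
    linarith [this]
  have htshiftle : ∀ N : ℕ, ‖w * q ^ N‖ ≤ ‖w‖ := by
    intro N
    rw [norm_mul, norm_pow]
    have := mul_le_mul_of_nonneg_left (hqk N) (norm_nonneg w)
    linarith [this]
  set E : ℝ := Ma / cf * (1 - ‖w‖)⁻¹ with hEdef
  have hE0 : 0 ≤ E := by positivity
  have hE : ∀ N : ℕ, ‖RF q (α * q ^ N) (β * q ^ N) (w * q ^ N)‖ ≤ E :=
    fun N => norm_RF_le (hAshift N) hcf (hcshift N) (htshiftle N) hw
  set D : ℝ := (1+‖α‖)*(1+‖α‖*‖w‖*‖q‖/‖β‖)*(‖β‖*‖w‖)/(cf*(1-‖w‖)) with hDdef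
  have hD0 : 0 ≤ D := by positivity
  have hRem : ∀ N : ℕ, ‖(∏ k ∈ Finset.range N, RC q (α*q^k) (β*q^k) (w*q^k)) *
      RF q (α * q ^ N) (β * q ^ N) (w * q ^ N)‖ ≤ E * D^N * ‖q‖^(N^2-N) := by
    intro N
    rw [norm_mul]
    calc ‖∏ k ∈ Finset.range N, RC q (α*q^k) (β*q^k) (w*q^k)‖ *
          ‖RF q (α * q ^ N) (β * q ^ N) (w * q ^ N)‖
        ≤ (D^N * ‖q‖^(N^2-N)) * E :=
          mul_le_mul (norm_RCprod hq hq0 hβ0 hw hcf hfac N) (hE N) (norm_nonneg _)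
            (by positivity)
      _ = E * D^N * ‖q‖^(N^2-N) := by ring
  have hRem0 : Tendsto (fun N : ℕ => (∏ k ∈ Finset.range N, RC q (α*q^k) (β*q^k) (w*q^k)) *
      RF q (α * q ^ N) (β * q ^ N) (w * q ^ N)) atTop (nhds 0) :=
    squeeze_zero_norm hRem
      (summable_aux (norm_nonneg q) hq E D hE0 hD0).tendsto_atTop_zero
  have hT : Summable (RT q α β w) := summable_RT hq hβ hw
  have h2 : Tendsto (fun N : ℕ => RF q α β w - ∑ n ∈ Finset.range N, RT q α β w n) atTop
      (nhds (RF q α β w - ∑' n, RT q α β w n)) :=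
    tendsto_const_nhds.sub hT.hasSum.tendsto_sum_nat
  have h3 : (fun N : ℕ => RF q α β w - ∑ n ∈ Finset.range N, RT q α β w n)
      = fun N : ℕ => (∏ k ∈ Finset.range N, RC q (α*q^k) (β*q^k) (w*q^k)) *
        RF q (α * q ^ N) (β * q ^ N) (w * q ^ N) := by
    funext N
    rw [ITER hq hq0 hβ hβ0 hw N]
    ring
  rw [h3] at h2
  have h4 := tendsto_nhds_unique h2 hRem0
  have h5 : RF q α β w = ∑' n, RT q α β w n := by
    have := sub_eq_zero.mp h4
    exact this
  exact h5

lemma qPoch_q0 (a : ℂ) (n : ℕ) : qPoch a 0 (n+1) = 1 - a := by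
  induction n with
  | zero => rw [qPoch_succ, qPoch_zero]; simp
  | succ n ih => rw [qPoch_succ, ih]; simp

theorem main_zero (α β w : ℂ) (hw : ‖w‖ < 1) (hβ0 : β ≠ 0)
    (hβ : ∀ j : ℕ, β * (0:ℂ) ^ j ≠ 1) :
    (∑' n : ℕ, qPoch α 0 n * w ^ n / qPoch β 0 n) = ∑' n : ℕ, RT 0 α β w n := by
  have hβ1 : (1:ℂ) - β ≠ 0 := sub_ne_zero_of_ne (Ne.symm (by simpa using hβ 0))
  have hw1 : w ≠ 1 := by intro h; rw [h, norm_one] at hw; exact lt_irrefl _ hw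
  have h1w : (1:ℂ) - w ≠ 0 := sub_ne_zero_of_ne (Ne.symm hw1)
  have hq : ‖(0:ℂ)‖ < 1 := by norm_num
  have hf : Summable (fun n : ℕ => qPoch α 0 n * w ^ n / qPoch β 0 n) :=
    summable_F hq hβ hw α
  have q1 : ∀ a : ℂ, qPoch a 0 1 = 1 - a := fun a => by
    rw [show (1:ℕ) = 0+1 from rfl, qPoch_q0]
  have q2 : qPoch w 0 2 = 1 - w := by rw [show (2:ℕ) = 1+1 from rfl, qPoch_q0]
  have hL : (∑' n : ℕ, qPoch α 0 n * w ^ n / qPoch β 0 n)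
      = 1 + (1-α)*w/(1-β) * (1-w)⁻¹ := by
    rw [Summable.tsum_eq_zero_add hf]
    have e0 : qPoch α 0 0 * w ^ 0 / qPoch β 0 0 = 1 := by simp [qPoch_zero]
    have e1 : ∀ n : ℕ, qPoch α 0 (n+1) * w ^ (n+1) / qPoch β 0 (n+1)
        = ((1-α)*w/(1-β)) * w^n := by
      intro n
      rw [qPoch_q0, qPoch_q0, pow_succ]
      ring
    rw [e0, tsum_congr e1, tsum_mul_left, tsum_geometric_of_norm_lt_one hw]
  have hR : (∑' n : ℕ, RT 0 α β w n)
      = (1 - α*w)/(1-w) + (1-α)*β*w/((1-β)*(1-w)) := by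
    rw [tsum_eq_sum (s := ({0,1} : Finset ℕ)) ?van]
    case van =>
      intro n hn
      have h2 : 2 ≤ n := by
        simp only [Finset.mem_insert, Finset.mem_singleton] at hn
        omega
      have hsq : n^2 = n*n := pow_two n
      have h2n : 2*n ≤ n*n := Nat.mul_le_mul_right n h2
      have hne : n^2 - n ≠ 0 := by omega
      simp [RT, zero_pow hne]
    rw [Finset.sum_pair (by norm_num : (0:ℕ) ≠ 1)]
    have g0 : RT 0 α β w 0 = (1-α*w)/(1-w) := RT_zero 0 α β w
    have g1 : RT 0 α β w 1 = (1-α)*β*w/((1-β)*(1-w)) := by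
      rw [RT, q1, q1, q1, q2]
      norm_num
    rw [g0, g1]
  rw [hL, hR]
  field_simp
  ring

/-- The Rogers–Fine identity, for `|q|, |w| < 1` and suitable `α, β`
(`β` nonzero and not a nonpositive integer power of `q`). -/
theorem stmt19 (α β w q : ℂ) (hq : ‖q‖ < 1) (hw : ‖w‖ < 1) (hβ0 : β ≠ 0)
    (hβ : ∀ j : ℕ, β * q ^ j ≠ 1) :
    (∑' n : ℕ, qPoch α q n * w ^ n / qPoch β q n) =
      ∑' n : ℕ, qPoch α q n * qPoch (α * w * q / β) q n * β ^ n * w ^ n * q ^ (n ^ 2 - n) *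
        (1 - α * w * q ^ (2 * n)) / (qPoch β q n * qPoch w q (n + 1)) := by
  show (∑' n : ℕ, qPoch α q n * w ^ n / qPoch β q n) = ∑' n : ℕ, RT q α β w n
  rcases eq_or_ne q 0 with rfl | hq0
  · exact main_zero α β w hw hβ0 hβ
  · exact main_ne_zero α β w q hq hw hβ0 hβ hq0
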